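/- Let r ∈ ℂ and define the Green's form [f₁,f₂]_r = (∂_z f₁ + (r/(z - z̄)) f₁) f₂ dz + f₁ (∂_{z̄} f₂) dz̄ for f₁, f₂ ∈ C^∞(U), U ⊂ ℍ open. If f₁ is r-harmonic on U (Δ_r f₁ = 0) and f₂ satisfies 4y² ∂_z ∂_{z̄} f₂ + 2iry ∂_{z̄} f₂ + r f₂ = 0 on U, then the 1-form [f₁, f₂]_r is closed on U. -/

import Mathlib

noncomputable def wderivBar (F : ℂ → ℂ) (z : ℂ) : ℂ :=
  (fderiv ℝ F z 1 + Complex.I * fderiv ℝ F z Complex.I) / 2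

noncomputable def wderiv (F : ℂ → ℂ) (z : ℂ) : ℂ :=
  (fderiv ℝ F z 1 - Complex.I * fderiv ℝ F z Complex.I) / 2

noncomputable def hlaplacian (r : ℂ) (F : ℂ → ℂ) (z : ℂ) : ℂ :=
  -4 * (z.im : ℂ) ^ 2 * wderiv (fun w => wderivBar F w) z +
    2 * Complex.I * r * (z.im : ℂ) * wderivBar F z

/-!
With `t = z - z̄ = 2iy` the two hypotheses read `t² ∂∂̄f₁ + r t ∂̄f₁ = 0` and
`-t² ∂∂̄f₂ + r t ∂̄f₂ + r f₂ = 0`. Expanding `∂̄((∂f₁ + (r/t) f₁) f₂) - ∂(f₁ ∂̄f₂)` by the Leibniz rule,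
with `∂̄(r/t) = r/t²` and `∂̄∂ = ∂∂̄` (symmetry of the second derivative), gives
`(f₂ · (first) + f₁ · (second)) / t² = 0`.
-/

open Complex ComplexConjugate

theorem ContDiffAt.differentiableAt_fderiv {E F : Type*} [NormedAddCommGroup E]
    [NormedSpace ℝ E] [NormedAddCommGroup F] [NormedSpace ℝ F] {f : E → F} {x : E}
    (hf : ContDiffAt ℝ 2 f x) : DifferentiableAt ℝ (fderiv ℝ f) x :=
  (hf.fderiv_right (m := 1) le_rfl).differentiableAt one_ne_zero

noncomputable def wirtingerDeriv (c : ℂ) (F : ℂ → ℂ) (z : ℂ) : ℂ :=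
  (fderiv ℝ F z 1 + c * fderiv ℝ F z I) / 2

theorem wderivBar_eq_wirtingerDeriv (F : ℂ → ℂ) : wderivBar F = wirtingerDeriv I F := rfl

theorem wderiv_eq_wirtingerDeriv (F : ℂ → ℂ) : wderiv F = wirtingerDeriv (-I) F := by
  ext z
  simp only [wderiv, wirtingerDeriv, neg_mul, sub_eq_add_neg]

section

variable {c : ℂ} {F G : ℂ → ℂ} {z : ℂ}

theorem wirtingerDeriv_add (hF : DifferentiableAt ℝ F z) (hG : DifferentiableAt ℝ G z) :
    wirtingerDeriv c (fun w => F w + G w) z = wirtingerDeriv c F z + wirtingerDeriv c G z := by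
  simp only [wirtingerDeriv, fderiv_fun_add hF hG, add_apply]
  ring

theorem wirtingerDeriv_mul (hF : DifferentiableAt ℝ F z) (hG : DifferentiableAt ℝ G z) :
    wirtingerDeriv c (fun w => F w * G w) z =
      wirtingerDeriv c F z * G z + F z * wirtingerDeriv c G z := by
  simp only [wirtingerDeriv, fderiv_fun_mul hF hG, add_apply, smul_apply, smul_eq_mul]
  ring

theorem wirtingerDeriv_comp_of_hasDerivAt {h : ℂ → ℂ} {h' : ℂ} (hh : HasDerivAt h h' (G z))
    (hG : DifferentiableAt ℝ G z) :
    wirtingerDeriv c (fun w => h (G w)) z = h' * wirtingerDeriv c G z := by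
  have hcomp := (hh.hasFDerivAt.restrictScalars ℝ).comp z hG.hasFDerivAt
  rw [wirtingerDeriv, wirtingerDeriv, ← Function.comp_def, hcomp.fderiv]
  simp only [ContinuousLinearMap.comp_apply, ContinuousLinearMap.coe_restrictScalars',
    ContinuousLinearMap.toSpanSingleton_apply, smul_eq_mul]
  ring

theorem hasFDerivAt_wirtingerDeriv (hF : DifferentiableAt ℝ (fderiv ℝ F) z) :
    HasFDerivAt (wirtingerDeriv c F)
      ((2 : ℂ)⁻¹ • ((fderiv ℝ (fderiv ℝ F) z).flip 1 + c • (fderiv ℝ (fderiv ℝ F) z).flip I)) z := by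
  have h1 := hF.hasFDerivAt.clm_apply (hasFDerivAt_const 1 z)
  have hI := hF.hasFDerivAt.clm_apply (hasFDerivAt_const I z)
  have h := (h1.fun_add (hI.const_mul c)).const_mul (2 : ℂ)⁻¹
  simp only [ContinuousLinearMap.comp_zero, zero_add] at h
  exact h.congr_of_eventuallyEq (.of_forall fun w => by simp only [wirtingerDeriv, div_eq_inv_mul])

theorem wirtingerDeriv_comm (hF : ContDiffAt ℝ 2 F z) (c d : ℂ) :
    wirtingerDeriv c (wirtingerDeriv d F) z = wirtingerDeriv d (wirtingerDeriv c F) z := by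
  have hsymm := hF.isSymmSndFDerivAt (by simp [minSmoothness_of_isRCLikeNormedField]) 1 I
  simp only [wirtingerDeriv, (hasFDerivAt_wirtingerDeriv hF.differentiableAt_fderiv).fderiv]
  simp only [smul_apply, add_apply, ContinuousLinearMap.flip_apply, smul_eq_mul, hsymm]
  ring

theorem ContDiffAt.differentiableAt_wirtingerDeriv (hF : ContDiffAt ℝ 2 F z) :
    DifferentiableAt ℝ (wirtingerDeriv c F) z :=
  (hasFDerivAt_wirtingerDeriv hF.differentiableAt_fderiv).differentiableAt

end

theorem hasFDerivAt_sub_conj (z : ℂ) :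
    HasFDerivAt (fun w => w - conj w)
      (ContinuousLinearMap.id ℝ ℂ - conjCLE.toContinuousLinearMap) z :=
  (hasFDerivAt_id z).sub conjCLE.toContinuousLinearMap.hasFDerivAt

theorem wirtingerDeriv_sub_conj (c z : ℂ) :
    wirtingerDeriv c (fun w => w - conj w) z = c * I := by
  simp only [wirtingerDeriv, (hasFDerivAt_sub_conj z).fderiv, sub_apply, ContinuousLinearMap.id_apply, ContinuousLinearEquiv.coe_coe,
    ContinuousAlgEquiv.coeCLE_apply, conjCAE_apply, map_one, sub_self, conj_I, sub_neg_eq_add,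
    zero_add]
  ring

theorem sub_conj_ne_zero {z : ℂ} (hz : z.im ≠ 0) : z - conj z ≠ 0 := by
  simp [sub_conj, hz]

theorem differentiableAt_div_sub_conj (r : ℂ) {z : ℂ} (hz : z.im ≠ 0) :
    DifferentiableAt ℝ (fun w => r / (w - conj w)) z := by
  fun_prop (disch := exact sub_conj_ne_zero hz)

theorem wirtingerDeriv_div_sub_conj (c r : ℂ) {z : ℂ} (hz : z.im ≠ 0) :
    wirtingerDeriv c (fun w => r / (w - conj w)) z = -(c * I) * r / (z - conj z) ^ 2 := by
  have hdiv : HasDerivAt (fun u => r / u) (-r / (z - conj z) ^ 2) (z - conj z) := by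
    simpa [div_eq_mul_inv] using (hasDerivAt_inv (sub_conj_ne_zero hz)).const_mul r
  rw [wirtingerDeriv_comp_of_hasDerivAt (G := fun w => w - conj w) hdiv
    (hasFDerivAt_sub_conj z).differentiableAt, wirtingerDeriv_sub_conj]
  ring

theorem hlaplacian_eq_sub_conj (r : ℂ) (F : ℂ → ℂ) (z : ℂ) :
    hlaplacian r F z = (z - conj z) ^ 2 * wderiv (fun w => wderivBar F w) z +
      r * (z - conj z) * wderivBar F z := by
  rw [hlaplacian, sub_conj]
  push_cast
  linear_combination (-4 * (z.im : ℂ) ^ 2 * wderiv (fun w => wderivBar F w) z) * I_sq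

/-- if `f₁` is `r`-harmonic and `f₂` satisfies
`4y² ∂_z ∂_z̄ f₂ + 2iry ∂_z̄ f₂ + r f₂ = 0` on `U ⊆ ℍ`, then the Green's form
`[f₁,f₂]_r = (∂_z f₁ + (r/(z-z̄)) f₁) f₂ dz + f₁ (∂_z̄ f₂) dz̄` is closed on `U`,
i.e. `∂_z̄ ((∂_z f₁ + (r/(z-z̄)) f₁) f₂) = ∂_z (f₁ ∂_z̄ f₂)` on `U`. -/
theorem greens_form_closed (r : ℂ) (U : Set ℂ) (hU : IsOpen U)
    (hUH : U ⊆ {z : ℂ | 0 < z.im})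
    (f₁ f₂ : ℂ → ℂ)
    (h1 : ContDiffOn ℝ (⊤ : ℕ∞) f₁ U) (h2 : ContDiffOn ℝ (⊤ : ℕ∞) f₂ U)
    (hf1 : ∀ z ∈ U, hlaplacian r f₁ z = 0)
    (hf2 : ∀ z ∈ U,
        4 * (z.im : ℂ) ^ 2 * wderiv (fun w => wderivBar f₂ w) z +
            2 * Complex.I * r * (z.im : ℂ) * wderivBar f₂ z + r * f₂ z = 0) :
    ∀ z ∈ U,
      wderivBar (fun w => (wderiv f₁ w + r / (w - starRingEnd ℂ w) * f₁ w) * f₂ w) z =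
        wderiv (fun w => f₁ w * wderivBar f₂ w) z := by
  intro z hz
  have hy : z.im ≠ 0 := (hUH hz).ne'
  have hF₁ : ContDiffAt ℝ 2 f₁ z := (h1.contDiffAt (hU.mem_nhds hz)).of_le (by norm_cast)
  have hF₂ : ContDiffAt ℝ 2 f₂ z := (h2.contDiffAt (hU.mem_nhds hz)).of_le (by norm_cast)
  have hd₁ := hF₁.differentiableAt two_ne_zero
  have hd₂ := hF₂.differentiableAt two_ne_zero
  have hg := differentiableAt_div_sub_conj r hy
  have harm₁ := hlaplacian_eq_sub_conj r f₁ z ▸ hf1 z hz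
  have harm₂ : -(z - conj z) ^ 2 * wderiv (fun w => wderivBar f₂ w) z +
      r * (z - conj z) * wderivBar f₂ z + r * f₂ z = 0 := by
    rw [sub_conj]
    push_cast
    linear_combination hf2 z hz - (4 * (z.im : ℂ) ^ 2 * wderiv (fun w => wderivBar f₂ w) z) * I_sq
  simp only [wderivBar_eq_wirtingerDeriv, wderiv_eq_wirtingerDeriv] at harm₁ harm₂ ⊢
  rw [wirtingerDeriv_mul ((hF₁.differentiableAt_wirtingerDeriv).fun_add (hg.fun_mul hd₁)) hd₂,
    wirtingerDeriv_add hF₁.differentiableAt_wirtingerDeriv (hg.fun_mul hd₁),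
    wirtingerDeriv_mul hg hd₁, wirtingerDeriv_mul hd₁ hF₂.differentiableAt_wirtingerDeriv,
    wirtingerDeriv_comm hF₁, wirtingerDeriv_div_sub_conj _ _ hy]
  field_simp [sub_conj_ne_zero hy]
  linear_combination f₂ z * harm₁ + f₁ z * harm₂ - r * f₁ z * f₂ z * I_sq
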